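/- arXiv:1212.6530 — 5 statements merged into one kernel-verified Lean document; each statement's English description precedes it below -/
import Mathlib

section
/- For a probability vector p = (p_1, p_2, ...) with p_i ∈ [0,1] and ∑ p_i = 1, the Rényi α-entropy converges to the Shannon entropy as α → 1: lim_{α→1, α≠1} (1/(1-α)) · log(∑_i p_i^α) = -∑_i p_i · log(p_i). -/
/-!
Put `G α = log ∑ pᵢ ^ α`. Since `∑ pᵢ = 1` we have `G 1 = 0`, so the Rényi entropy
`G α / (1 - α)` is minus the difference quotient of `G` at `1` and tends to `-G' 1`.
For `p ∈ [0, 1]` and `t < α` one has `|p ^ α log p| ≤ (α - t)⁻¹ p ^ t`, so with `t = 1/2`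
the series `∑ pᵢ ^ α` can be differentiated termwise near `α = 1`, giving
`G' 1 = ∑ pᵢ log pᵢ`.
-/

open Filter

namespace Real

theorem hasDerivAt_const_rpow_of_nonneg {x y : ℝ} (hx : 0 ≤ x) (hy : 0 < y) :
    HasDerivAt (fun a => x ^ a) (x ^ y * log x) y := by
  rcases hx.eq_or_lt with rfl | hx
  · have hzero : (fun a : ℝ => (0 : ℝ) ^ a) =ᶠ[nhds y] fun _ => 0 := by
      filter_upwards [lt_mem_nhds hy] with a ha using zero_rpow ha.ne'
    simpa using (hasDerivAt_const y (0 : ℝ)).congr_of_eventuallyEq hzero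
  · exact (hasStrictDerivAt_const_rpow hx y).hasDerivAt

theorem abs_rpow_mul_log_le {x y t : ℝ} (hx0 : 0 ≤ x) (hx1 : x ≤ 1) (hty : t < y) :
    |x ^ y * log x| ≤ (y - t)⁻¹ * x ^ t := by
  rcases hx0.eq_or_lt with rfl | hx0
  · simpa using mul_nonneg (inv_nonneg.2 (sub_pos.2 hty).le) (rpow_nonneg le_rfl t)
  calc |x ^ y * log x| = x ^ t * |log x * x ^ (y - t)| := by
        rw [abs_mul, abs_mul, abs_of_pos (rpow_pos_of_pos hx0 _),
          abs_of_pos (rpow_pos_of_pos hx0 _), ← mul_assoc, mul_comm (x ^ t), mul_assoc,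
          ← rpow_add hx0, add_sub_cancel]
        ring
    _ ≤ x ^ t * (y - t)⁻¹ := by
        gcongr
        simpa using (abs_log_mul_self_rpow_lt x (y - t) hx0 hx1 (sub_pos.2 hty)).le
    _ = (y - t)⁻¹ * x ^ t := mul_comm _ _

end Real

open Real in
theorem hasDerivAt_tsum_rpow {ι : Type*} {p : ι → ℝ} (hp : ∀ i, p i ∈ Set.Icc (0 : ℝ) 1)
    {t α : ℝ} (ht : 0 < t) (htα : t < α) (hsum : Summable fun i => p i ^ t) :
    HasDerivAt (fun a => ∑' i, p i ^ a) (∑' i, p i ^ α * log (p i)) α := by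
  set s := Set.Ioi ((t + α) / 2)
  have hαs : α ∈ s := by simp only [s, Set.mem_Ioi]; linarith
  have hts : ∀ y ∈ s, t < y := fun y hy => by simp only [s, Set.mem_Ioi] at hy; linarith
  -- on `s` the derivatives `p i ^ y * log (p i)` are dominated by `2 / (α - t) * p i ^ t`
  refine hasDerivAt_tsum_of_isPreconnected (hsum.mul_left (2 / (α - t))) isOpen_Ioi
    isPreconnected_Ioi
    (fun i y hy => hasDerivAt_const_rpow_of_nonneg (hp i).1 (ht.trans (hts y hy)))
    (fun i y hy => ?_) hαs ?_ hαs
  · calc ‖p i ^ y * log (p i)‖ ≤ (y - t)⁻¹ * p i ^ t :=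
          abs_rpow_mul_log_le (hp i).1 (hp i).2 (hts y hy)
      _ ≤ 2 / (α - t) * p i ^ t := by
          gcongr
          · exact rpow_nonneg (hp i).1 _
          · rw [inv_eq_one_div, div_le_div_iff₀ (by linarith [hts y hy]) (by linarith)]
            simp only [Set.mem_Ioi] at hy
            linarith
  · exact hsum.of_nonneg_of_le (fun i => rpow_nonneg (hp i).1 _)
      (fun i => rpow_le_rpow_of_exponent_ge' (hp i).1 (hp i).2 ht.le htα.le)

theorem HasDerivAt.tendsto_one_div_one_sub_mul {G : ℝ → ℝ} {G' : ℝ} (hG : HasDerivAt G G' 1)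
    (hG1 : G 1 = 0) :
    Tendsto (fun α => 1 / (1 - α) * G α) (nhdsWithin 1 {1}ᶜ) (nhds (-G')) := by
  refine (hasDerivAt_iff_tendsto_slope.mp hG).neg.congr fun α => ?_
  rw [slope_def_field, hG1, sub_zero, ← div_neg, neg_sub, one_div, inv_mul_eq_div]

theorem stmt_0_general (p : ℕ → ℝ) (hp : ∀ i, p i ∈ Set.Icc (0:ℝ) 1) (hsum : HasSum p 1)
    (hfin : ∀ α : ℝ, 0 < α → Summable (fun i => p i ^ α)) :
    Tendsto (fun α : ℝ => (1 / (1 - α)) * Real.log (∑' i, p i ^ α))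
      (nhdsWithin 1 {(1:ℝ)}ᶜ) (nhds (-∑' i, p i * Real.log (p i))) := by
  have hpow_one : ∑' i, p i ^ (1 : ℝ) = 1 := by simpa using hsum.tsum_eq
  have hderiv := (hasDerivAt_tsum_rpow hp one_half_pos one_half_lt_one
    (hfin _ one_half_pos)).log (by rw [hpow_one]; exact one_ne_zero)
  simp only [Real.rpow_one, hsum.tsum_eq, div_one] at hderiv
  exact hderiv.tendsto_one_div_one_sub_mul (by rw [hpow_one, Real.log_one])

/-- For a probability vector `p`, the Rényi α-entropy converges to the Shannon entropy
as `α → 1`, `α ≠ 1`. -/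
theorem stmt_0 (p : ℕ → ℝ) (hp : ∀ i, p i ∈ Set.Icc (0:ℝ) 1) (hsum : HasSum p 1)
    (hfin : ∀ α : ℝ, 0 < α → Summable (fun i => p i ^ α))
    (hsh : Summable (fun i => p i * Real.log (p i))) :
    Tendsto (fun α : ℝ => (1 / (1 - α)) * Real.log (∑' i, p i ^ α))
      (nhdsWithin 1 {(1:ℝ)}ᶜ) (nhds (-∑' i, p i * Real.log (p i))) :=
  stmt_0_general p hp hsum hfin
end

section
/- For α > 1 and R > 0, the optimal quantization error under Rényi-α-entropy constraint R is bounded above by the mass-constrained optimal error at level ((α-1)/α)R: D^α_{μ,ρ}(R) ≤ D^∞_{μ,ρ}(((α-1)/α)·R). -/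
open MeasureTheory Filter Set
open scoped ENNReal NNReal Classical

variable {E : Type*} [NormedAddCommGroup E] [NormedSpace ℝ E] [CompleteSpace E]
  [MeasurableSpace E] [BorelSpace E] [SecondCountableTopology E]

/-- A centered Gaussian measure: every continuous linear functional has a centered
Gaussian distribution under `μ`. -/
def IsCenteredGaussian (μ : Measure E) : Prop :=
  ∀ L : E →L[ℝ] ℝ, ∃ v : NNReal, μ.map L = ProbabilityTheory.gaussianReal 0 v

/-- A quantizer: a Borel measurable map with countable image. -/
def IsQuantizer (f : E → E) : Prop := Measurable f ∧ (Set.range f).Countable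

/-- Mass of the codecell of the codepoint `z`. -/
noncomputable def cellMass (μ : Measure E) (f : E → E) (z : E) : ℝ := (μ (f ⁻¹' {z})).toReal

/-- The Rényi-`α`-entropy of a quantizer `f` w.r.t. `μ`, for `α ∈ [0,∞]`
(with value `∞` allowed). -/
noncomputable def renyiEntropy (μ : Measure E) (f : E → E) (α : ℝ≥0∞) : ℝ≥0∞ :=
  if α = ⊤ then ENNReal.ofReal (-Real.log (⨆ z : Set.range f, cellMass μ f ↑z))
  else if α = 0 then
    (if h : {z | z ∈ Set.range f ∧ μ (f ⁻¹' {z}) ≠ 0}.Finite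
      then ENNReal.ofReal (Real.log h.toFinset.card) else ⊤)
  else if α = 1 then
    ∑' z : Set.range f, ENNReal.ofReal (-(cellMass μ f ↑z * Real.log (cellMass μ f ↑z)))
  else if (∑' z : Set.range f, ENNReal.ofReal (cellMass μ f ↑z ^ α.toReal)) = ⊤ then ⊤
  else ENNReal.ofReal ((1 / (1 - α.toReal)) *
    Real.log (∑' z : Set.range f, ENNReal.ofReal (cellMass μ f ↑z ^ α.toReal)).toReal)

/-- The quantization error of `f` for the distance function `ρ`. -/
noncomputable def quantError (μ : Measure E) (ρ : ℝ → ℝ) (f : E → E) : ℝ :=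
  ∫ x, ρ ‖x - f x‖ ∂μ

/-- The optimal quantization error under Rényi-`α`-entropy bound `R`. -/
noncomputable def optError (μ : Measure E) (ρ : ℝ → ℝ) (α : ℝ≥0∞) (R : ℝ) : ℝ :=
  sInf {d | ∃ f : E → E, IsQuantizer f ∧ renyiEntropy μ f α ≤ ENNReal.ofReal R ∧
    d = quantError μ ρ f}

/-!
For `α > 1` the Rényi sum of a quantizer dominates the `α`-th power of its largest cell mass,
`∑ p_z ^ α ≥ (sup p_z) ^ α`, so `H^α(f) ≤ α / (α - 1) · H^∞(f)`. Hence every quantizer with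
`H^∞(f) ≤ ((α - 1) / α) R` has `H^α(f) ≤ R`, and the infimum defining `D^α(R)` runs over a
larger class than the one defining `D^∞(((α - 1) / α) R)`.
-/

set_option linter.unusedSectionVars false

lemma IsQuantizer.tsum_measure_cell (μ : Measure E) [IsProbabilityMeasure μ] {f : E → E}
    (hf : IsQuantizer f) : ∑' z : range f, μ (f ⁻¹' {(z : E)}) = 1 := by
  rw [tsum_measure_preimage_singleton hf.2 fun z _ => hf.1 (measurableSet_singleton z),
    preimage_range, measure_univ]

lemma cellMass_le_one (μ : Measure E) [IsProbabilityMeasure μ] (f : E → E) (z : E) :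
    cellMass μ f z ≤ 1 :=
  ENNReal.toReal_le_of_le_ofReal zero_le_one (by simpa using prob_le_one)

lemma bddAbove_range_cellMass (μ : Measure E) [IsProbabilityMeasure μ] (f : E → E) :
    BddAbove (range fun z : range f => cellMass μ f z) :=
  ⟨1, by rintro _ ⟨z, rfl⟩; exact cellMass_le_one μ f z⟩

lemma IsQuantizer.iSup_cellMass_pos (μ : Measure E) [IsProbabilityMeasure μ] {f : E → E}
    (hf : IsQuantizer f) : 0 < ⨆ z : range f, cellMass μ f z := by
  obtain ⟨z, hz⟩ : ∃ z : range f, μ (f ⁻¹' {(z : E)}) ≠ 0 := by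
    by_contra! h
    simpa [ENNReal.tsum_eq_zero.mpr h] using hf.tsum_measure_cell μ
  exact (ENNReal.toReal_pos hz (measure_ne_top μ _)).trans_le
    (le_ciSup (bddAbove_range_cellMass μ f) z)

lemma IsQuantizer.tsum_cellMass_rpow_le_one (μ : Measure E) [IsProbabilityMeasure μ]
    {f : E → E} (hf : IsQuantizer f) {α : ℝ} (hα : 1 ≤ α) :
    ∑' z : range f, ENNReal.ofReal (cellMass μ f z ^ α) ≤ 1 :=
  calc ∑' z : range f, ENNReal.ofReal (cellMass μ f z ^ α)
      ≤ ∑' z : range f, ENNReal.ofReal (cellMass μ f z) := by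
        gcongr with z
        exact Real.rpow_le_self_of_le_one ENNReal.toReal_nonneg (cellMass_le_one μ f z) hα
    _ = 1 := by
        simpa [cellMass, ENNReal.ofReal_toReal (measure_ne_top μ _)] using hf.tsum_measure_cell μ

lemma iSup_cellMass_rpow_le_toReal_tsum (μ : Measure E) [IsProbabilityMeasure μ] (f : E → E)
    {α : ℝ} (hα : 0 < α) (hS : ∑' z : range f, ENNReal.ofReal (cellMass μ f z ^ α) ≠ ⊤) :
    (⨆ z : range f, cellMass μ f z) ^ α ≤
      (∑' z : range f, ENNReal.ofReal (cellMass μ f z ^ α)).toReal := by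
  have : Nonempty (range f) := ⟨⟨f 0, mem_range_self 0⟩⟩
  rw [← Real.le_rpow_inv_iff_of_pos (le_ciSup_of_le (bddAbove_range_cellMass μ f)
    (Classical.arbitrary _) ENNReal.toReal_nonneg) ENNReal.toReal_nonneg hα]
  refine ciSup_le fun z => (Real.le_rpow_inv_iff_of_pos ENNReal.toReal_nonneg
    ENNReal.toReal_nonneg hα).2 ?_
  rw [← ENNReal.ofReal_le_iff_le_toReal hS]
  exact ENNReal.le_tsum z

lemma renyiEntropy_top_eq (μ : Measure E) (f : E → E) :
    renyiEntropy μ f ⊤ = ENNReal.ofReal (-Real.log (⨆ z : range f, cellMass μ f z)) := by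
  simp [renyiEntropy]

lemma renyiEntropy_ofReal_eq {μ : Measure E} {f : E → E} {α : ℝ} (hα : 1 < α)
    (hS : ∑' z : range f, ENNReal.ofReal (cellMass μ f z ^ α) ≠ ⊤) :
    renyiEntropy μ f (ENNReal.ofReal α) = ENNReal.ofReal (1 / (1 - α) *
      Real.log (∑' z : range f, ENNReal.ofReal (cellMass μ f z ^ α)).toReal) := by
  have hα0 : 0 < α := zero_lt_one.trans hα
  rw [renyiEntropy, if_neg ENNReal.ofReal_ne_top, if_neg (by simpa using hα0),
    if_neg (by simpa using hα.ne'), ENNReal.toReal_ofReal hα0.le, if_neg hS]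

lemma IsQuantizer.renyiEntropy_ofReal_le_mul_renyiEntropy_top (μ : Measure E)
    [IsProbabilityMeasure μ] {f : E → E} (hf : IsQuantizer f) {α : ℝ} (hα : 1 < α) :
    renyiEntropy μ f (ENNReal.ofReal α) ≤
      ENNReal.ofReal (α / (α - 1)) * renyiEntropy μ f ⊤ := by
  set S := ∑' z : range f, ENNReal.ofReal (cellMass μ f z ^ α)
  set M := ⨆ z : range f, cellMass μ f z
  have hα0 : 0 < α := zero_lt_one.trans hα
  have hS : S ≠ ⊤ := ne_top_of_le_ne_top ENNReal.one_ne_top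
    (hf.tsum_cellMass_rpow_le_one μ hα.le)
  have hM : 0 < M := hf.iSup_cellMass_pos μ
  have hlog : α * Real.log M ≤ Real.log S.toReal := by
    rw [← Real.log_rpow hM]
    exact Real.log_le_log (Real.rpow_pos_of_pos hM α)
      (iSup_cellMass_rpow_le_toReal_tsum μ f hα0 hS)
  rw [renyiEntropy_ofReal_eq hα hS, renyiEntropy_top_eq,
    ← ENNReal.ofReal_mul (div_nonneg hα0.le (sub_pos.2 hα).le)]
  refine ENNReal.ofReal_le_ofReal ?_
  calc 1 / (1 - α) * Real.log S.toReal = -(Real.log S.toReal / (α - 1)) := by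
        rw [one_div, ← neg_sub α 1, inv_neg, neg_mul, ← div_eq_inv_mul]
    _ ≤ -(α * Real.log M / (α - 1)) :=
        neg_le_neg (div_le_div_of_nonneg_right hlog (sub_pos.2 hα).le)
    _ = α / (α - 1) * -Real.log M := by ring

lemma isQuantizer_const (c : E) : IsQuantizer fun _ : E => c :=
  ⟨measurable_const, (countable_singleton c).mono range_const_subset⟩

lemma renyiEntropy_const_top (μ : Measure E) [IsProbabilityMeasure μ] (c : E) :
    renyiEntropy μ (fun _ : E => c) ⊤ = 0 := by
  have hcell (z : range fun _ : E => c) : cellMass μ (fun _ => c) z = 1 := by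
    obtain ⟨_, _, rfl⟩ := z
    simp [cellMass]
  have : Nonempty (range fun _ : E => c) := ⟨⟨c, 0, rfl⟩⟩
  simp [renyiEntropy_top_eq, hcell]

lemma optError_le_optError {μ : Measure E} {ρ : ℝ → ℝ} {α β : ℝ≥0∞} {R R' : ℝ}
    (hρ : MapsTo ρ (Ici 0) (Ici 0))
    (hne : ∃ f, IsQuantizer f ∧ renyiEntropy μ f β ≤ ENNReal.ofReal R')
    (himp : ∀ f, IsQuantizer f → renyiEntropy μ f β ≤ ENNReal.ofReal R' →
      renyiEntropy μ f α ≤ ENNReal.ofReal R) :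
    optError μ ρ α R ≤ optError μ ρ β R' := by
  refine csInf_le_csInf ⟨0, ?_⟩ ?_ ?_
  · rintro _ ⟨f, -, -, rfl⟩
    exact integral_nonneg fun x => hρ (norm_nonneg (x - f x))
  · obtain ⟨f, hf, hβ⟩ := hne
    exact ⟨_, f, hf, hβ, rfl⟩
  · rintro _ ⟨f, hf, hβ, rfl⟩
    exact ⟨f, hf, himp f hf hβ, rfl⟩

theorem stmt_8_general (μ : Measure E) [IsProbabilityMeasure μ]
    (ρ : ℝ → ℝ)
    (hρmaps : Set.MapsTo ρ (Set.Ici 0) (Set.Ici 0))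
    (α : ℝ) (hα : 1 < α) (R : ℝ) :
    optError μ ρ (ENNReal.ofReal α) R ≤ optError μ ρ ⊤ ((α - 1) / α * R) := by
  refine optError_le_optError hρmaps
    ⟨_, isQuantizer_const 0, (renyiEntropy_const_top μ 0).trans_le zero_le⟩
    fun f hf hf_top => ?_
  have hα0 : 0 < α := zero_lt_one.trans hα
  calc renyiEntropy μ f (ENNReal.ofReal α)
      ≤ ENNReal.ofReal (α / (α - 1)) * renyiEntropy μ f ⊤ :=
        hf.renyiEntropy_ofReal_le_mul_renyiEntropy_top μ hα
    _ ≤ ENNReal.ofReal (α / (α - 1)) * ENNReal.ofReal ((α - 1) / α * R) := by gcongr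
    _ = ENNReal.ofReal R := by
        rw [← ENNReal.ofReal_mul (div_nonneg hα0.le (sub_pos.2 hα).le)]
        congr 1
        field_simp [(sub_pos.2 hα).ne']

/-- For `α > 1` and `R > 0`, the optimal quantization error under Rényi-α-entropy bound
`R` is at most the mass-constrained optimal error at level `((α-1)/α)R`. -/
theorem stmt_8 (μ : Measure E) [IsProbabilityMeasure μ] (hμ : IsCenteredGaussian μ)
    [NullSingletonClass μ] [μ.IsOpenPosMeasure] (hdim : ¬ FiniteDimensional ℝ E)
    (ρ : ℝ → ℝ) (hρ0 : ρ 0 = 0) (hρmono : StrictMonoOn ρ (Set.Ici 0))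
    (hρcont : ContinuousOn ρ (Set.Ici 0)) (hρsurj : Set.SurjOn ρ (Set.Ici 0) (Set.Ici 0))
    (hρmaps : Set.MapsTo ρ (Set.Ici 0) (Set.Ici 0))
    (hρint : Integrable (fun x => ρ ‖x‖) μ)
    (α : ℝ) (hα : 1 < α) (R : ℝ) (hR : 0 < R) :
    optError μ ρ (ENNReal.ofReal α) R ≤ optError μ ρ ⊤ ((α - 1) / α * R) :=
  stmt_8_general μ ρ hρmaps α hα R
end

section
/- Let c > 0, a > 0, b ∈ ℝ, and b_μ: (0,∞) → (0,∞) continuous, surjective, strictly decreasing. If b_μ(s) ~ c·(1/s)^a·(log(1/s))^b as s → 0, then its inverse satisfies b_μ^{-1}(R) ~ c^{1/a}·a^{-b/a}·R^{-1/a}·(log R)^{b/a} as R → ∞. -/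
/-!
Taking logarithms in `b_μ(s) ~ c (1/s)^a (log (1/s))^b` gives `log b_μ(s) ~ a log (1/s)`.
Solving the asymptotic relation for `s` and replacing `log (1/s)` by `log b_μ(s) / a` yields
`s ~ c^{1/a} a^{-b/a} b_μ(s)^{-1/a} (log b_μ(s))^{b/a}` as `s → 0+`. Since `b_μ` is decreasing,
`b_μ^{-1}(R) → 0+` as `R → ∞`, and substituting `s = b_μ^{-1}(R)` gives the claim.
-/

open Filter Set Asymptotics Topology

theorem Asymptotics.IsEquivalent.rpow_of_eventually_nonneg {α : Type*} {l : Filter α}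
    {u v : α → ℝ} (h : u ~[l] v) (hv : ∀ᶠ x in l, 0 ≤ v x) (r : ℝ) :
    u ^ r ~[l] v ^ r := by
  have hv_abs : v =ᶠ[l] fun x => |v x| := hv.mono fun x hx => (abs_of_nonneg hx).symm
  exact ((h.congr_right hv_abs).rpow fun x => abs_nonneg (v x)).congr_right
    (hv_abs.symm.fun_comp (· ^ r))

theorem Asymptotics.isEquivalent_const_add_mul_add_mul_log {α : Type*} {l : Filter α}
    {L : α → ℝ} (hL : Tendsto L l atTop) (C : ℝ) {a : ℝ} (ha : a ≠ 0) (b : ℝ) :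
    (fun x => C + a * L x + b * Real.log (L x)) ~[l] fun x => a * L x := by
  have haL : Tendsto (fun x => ‖a * L x‖) l atTop := by
    simpa [norm_mul] using (tendsto_abs_atTop_atTop.comp hL).const_mul_atTop (abs_pos.mpr ha)
  have hC : (fun _ => C) =o[l] fun x => a * L x := isLittleO_const_left.mpr (Or.inr haL)
  have hlog : (fun x => b * Real.log (L x)) =o[l] fun x => a * L x :=
    ((Real.isLittleO_log_id_atTop.comp_tendsto hL).const_mul_left b).const_mul_right ha
  refine (IsEquivalent.refl.add_isLittleO (hC.add hlog)).congr_left ?_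
  filter_upwards with x
  simp only [Pi.add_apply]
  ring

theorem AntitoneOn.tendsto_nhdsGT_zero_of_rightInvOn {f g : ℝ → ℝ} (hf : AntitoneOn f (Ioi 0))
    (hg : MapsTo g (Ioi 0) (Ioi 0)) (hfg : RightInvOn g f (Ioi 0)) :
    Tendsto g atTop (𝓝[>] 0) := by
  refine (nhdsGT_basis (0:ℝ)).tendsto_right_iff.mpr fun ε hε => ?_
  filter_upwards [eventually_gt_atTop (max (f ε) 0)] with R hR
  have hR0 : 0 < R := (le_max_right _ _).trans_lt hR
  refine ⟨hg hR0, lt_of_not_ge fun hεg => ?_⟩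
  have : R ≤ f ε := hfg hR0 ▸ hf hε (hg hR0) hεg
  exact ((le_max_left _ _).trans_lt hR).not_ge this

noncomputable def smallBallRate (c a b s : ℝ) : ℝ := c * (1 / s) ^ a * Real.log (1 / s) ^ b

noncomputable def inverseRate (c a b R : ℝ) : ℝ :=
  c ^ (1 / a) * a ^ (-(b / a)) * R ^ (-(1 / a)) * Real.log R ^ (b / a)

theorem smallBallRate_pos {c a s : ℝ} (b : ℝ) (hc : 0 < c) (hs : 0 < s)
    (hL : 0 < Real.log (1 / s)) : 0 < smallBallRate c a b s := by
  unfold smallBallRate; positivity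

theorem log_smallBallRate {c a s : ℝ} (b : ℝ) (hc : 0 < c) (hs : 0 < s)
    (hL : 0 < Real.log (1 / s)) :
    Real.log (smallBallRate c a b s)
      = Real.log c + a * Real.log (1 / s) + b * Real.log (Real.log (1 / s)) := by
  unfold smallBallRate
  rw [Real.log_mul (by positivity) (by positivity), Real.log_mul (by positivity) (by positivity),
    Real.log_rpow (by positivity), Real.log_rpow hL]

theorem smallBallRate_rpow_neg_inv {c a s : ℝ} (b : ℝ) (hc : 0 < c) (ha : 0 < a) (hs : 0 < s)
    (hL : 0 < Real.log (1 / s)) :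
    smallBallRate c a b s ^ (-(1 / a)) = c ^ (-(1 / a)) * s * Real.log (1 / s) ^ (-(b / a)) := by
  unfold smallBallRate
  rw [Real.mul_rpow (by positivity) (by positivity), Real.mul_rpow (by positivity) (by positivity),
    ← Real.rpow_mul (by positivity), ← Real.rpow_mul hL.le]
  field_simp
  simp [Real.rpow_neg_one]

theorem isEquivalent_inverseRate_of_isEquivalent_smallBallRate {f : ℝ → ℝ} {c a : ℝ} (b : ℝ)
    (hc : 0 < c) (ha : 0 < a) (hf : f ~[𝓝[>] 0] smallBallRate c a b) :
    (fun s => s) ~[𝓝[>] 0] fun s => inverseRate c a b (f s) := by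
  set L : ℝ → ℝ := fun s => Real.log (1 / s)
  have hL : Tendsto L (𝓝[>] 0) atTop :=
    Real.tendsto_log_atTop.comp (tendsto_inv_nhdsGT_zero.congr fun s => (one_div s).symm)
  have hpos : ∀ᶠ s in 𝓝[>] 0, 0 < s ∧ 0 < L s :=
    (eventually_mem_nhdsWithin (a := (0:ℝ)) (s := Ioi 0)).and (hL.eventually_gt_atTop 0)
  have hlog_rate : (fun s => Real.log (smallBallRate c a b s)) ~[𝓝[>] 0] fun s => a * L s := by
    refine (isEquivalent_const_add_mul_add_mul_log hL (Real.log c) ha.ne' b).congr_left ?_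
    filter_upwards [hpos] with s ⟨hs, hLs⟩
    exact (log_smallBallRate b hc hs hLs).symm
  have hrate_top : Tendsto (smallBallRate c a b) (𝓝[>] 0) atTop := by
    refine (Real.tendsto_exp_atTop.comp
      (hlog_rate.symm.tendsto_atTop (hL.const_mul_atTop ha))).congr' ?_
    filter_upwards [hpos] with s ⟨hs, hLs⟩
    exact Real.exp_log (smallBallRate_pos b hc hs hLs)
  have hlog_f : (fun s => Real.log (f s)) ~[𝓝[>] 0] fun s => a * L s :=
    (hf.log hrate_top).trans hlog_rate
  have hprod := ((IsEquivalent.refl (u := fun _ => c ^ (1 / a) * a ^ (-(b / a)))).mul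
    (hf.rpow_of_eventually_nonneg (hpos.mono fun s h => (smallBallRate_pos b hc h.1 h.2).le)
      (-(1 / a)))).mul
    (hlog_f.rpow_of_eventually_nonneg (hpos.mono fun s h => mul_nonneg ha.le h.2.le) (b / a))
  refine (hprod.congr_right ?_).symm
  filter_upwards [hpos] with s ⟨hs, hLs⟩
  simp only [Pi.mul_apply, Pi.pow_apply, smallBallRate_rpow_neg_inv b hc ha hs hLs]
  rw [Real.mul_rpow ha.le hLs.le, Real.rpow_neg hc.le, Real.rpow_neg ha.le, Real.rpow_neg hLs.le]
  field_simp

theorem stmt_10_general (bμ binv : ℝ → ℝ) (c a b : ℝ) (hc : 0 < c) (ha : 0 < a)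
    (hanti : StrictAntiOn bμ (Ioi 0))
    (hinv2 : ∀ R ∈ Ioi (0:ℝ), bμ (binv R) = R)
    (hinvmaps : MapsTo binv (Ioi 0) (Ioi 0))
    (hasym : Tendsto (fun s => bμ s / (c * (1 / s) ^ a * (Real.log (1 / s)) ^ b))
      (nhdsWithin 0 (Ioi 0)) (nhds 1)) :
    Tendsto (fun R => binv R /
        (c ^ (1 / a) * a ^ (-(b / a)) * R ^ (-(1 / a)) * (Real.log R) ^ (b / a)))
      atTop (nhds 1) := by
  have hbinv : Tendsto binv atTop (𝓝[>] 0) :=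
    hanti.antitoneOn.tendsto_nhdsGT_zero_of_rightInvOn hinvmaps hinv2
  have hs : (fun s => s) ~[𝓝[>] 0] fun s => inverseRate c a b (bμ s) :=
    isEquivalent_inverseRate_of_isEquivalent_smallBallRate b hc ha
      (isEquivalent_of_tendsto_one hasym)
  have hequiv : binv ~[atTop] inverseRate c a b := by
    refine (hs.comp_tendsto hbinv).congr_right ?_
    filter_upwards [eventually_gt_atTop 0] with R hR
    simp only [Function.comp_apply, hinv2 R hR]
  have hrate_pos : ∀ᶠ R in atTop, inverseRate c a b R ≠ 0 := by
    filter_upwards [eventually_gt_atTop 1] with R hR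
    have := Real.log_pos hR
    unfold inverseRate
    positivity
  exact (isEquivalent_iff_tendsto_one hrate_pos).mp hequiv

/-- Inversion of sharp small-ball asymptotics: if `b_μ(s) ~ c (1/s)^a (log(1/s))^b` as
`s → 0+`, then `b_μ^{-1}(R) ~ c^{1/a} a^{-b/a} R^{-1/a} (log R)^{b/a}` as `R → ∞`. -/
theorem stmt_10 (bμ binv : ℝ → ℝ) (c a b : ℝ) (hc : 0 < c) (ha : 0 < a)
    (hcont : ContinuousOn bμ (Ioi 0)) (hanti : StrictAntiOn bμ (Ioi 0))
    (hsurj : SurjOn bμ (Ioi 0) (Ioi 0)) (hmaps : MapsTo bμ (Ioi 0) (Ioi 0))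
    (hinv1 : ∀ s ∈ Ioi (0:ℝ), binv (bμ s) = s)
    (hinv2 : ∀ R ∈ Ioi (0:ℝ), bμ (binv R) = R)
    (hinvmaps : MapsTo binv (Ioi 0) (Ioi 0))
    (hasym : Tendsto (fun s => bμ s / (c * (1 / s) ^ a * (Real.log (1 / s)) ^ b))
      (nhdsWithin 0 (Ioi 0)) (nhds 1)) :
    Tendsto (fun R => binv R /
        (c ^ (1 / a) * a ^ (-(b / a)) * R ^ (-(1 / a)) * (Real.log R) ^ (b / a)))
      atTop (nhds 1) :=
  stmt_10_general bμ binv c a b hc ha hanti hinv2 hinvmaps hasym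
end

section
/- Let b_μ: (0,∞) → (0,∞) be continuous, surjective, strictly decreasing, a > 0, b ∈ ℝ. If there exist constants 0 < m ≤ M < ∞ with m ≤ b_μ(s)/[(1/s)^a (log(1/s))^b] ≤ M for all small s, then there exist 0 < m' ≤ M' < ∞ with m' ≤ b_μ^{-1}(R)/[R^{-1/a}(log R)^{b/a}] ≤ M' for all large R. -/
open Filter Set

private lemma aux_rpow {R C L a b : ℝ} (hR : 0 < R) (hC : 0 < C) (hL : 0 < L) (ha : 0 < a) :
    (R / (C * L ^ b)) ^ (-(1/a)) = C ^ (1/a) * L ^ (b/a) * R ^ (-(1/a)) := by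
  have hLb : (0:ℝ) < L ^ b := Real.rpow_pos_of_pos hL b
  rw [Real.rpow_neg (by positivity), Real.div_rpow hR.le (by positivity), inv_div,
    Real.mul_rpow hC.le hLb.le, ← Real.rpow_mul hL.le,
    show b * (1/a) = b/a by ring, Real.rpow_neg hR.le, div_eq_mul_inv]

private lemma aux_sandwich {c1 c2 x y : ℝ} (p : ℝ) (hc1 : 0 < c1) (hc2 : 0 < c2) (hy : 0 < y)
    (h1 : c1 * y ≤ x) (h2 : x ≤ c2 * y) :
    min (c1 ^ p) (c2 ^ p) * y ^ p ≤ x ^ p ∧ x ^ p ≤ max (c1 ^ p) (c2 ^ p) * y ^ p := by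
  have hx : 0 < x := lt_of_lt_of_le (by positivity) h1
  have hyp : 0 < y ^ p := Real.rpow_pos_of_pos hy p
  rcases le_total 0 p with hp | hp
  · constructor
    · calc min (c1 ^ p) (c2 ^ p) * y ^ p ≤ c1 ^ p * y ^ p :=
            mul_le_mul_of_nonneg_right (min_le_left _ _) hyp.le
        _ = (c1 * y) ^ p := (Real.mul_rpow hc1.le hy.le).symm
        _ ≤ x ^ p := Real.rpow_le_rpow (by positivity) h1 hp
    · calc x ^ p ≤ (c2 * y) ^ p := Real.rpow_le_rpow hx.le h2 hp
        _ = c2 ^ p * y ^ p := Real.mul_rpow hc2.le hy.le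
        _ ≤ max (c1 ^ p) (c2 ^ p) * y ^ p :=
            mul_le_mul_of_nonneg_right (le_max_right _ _) hyp.le
  · constructor
    · calc min (c1 ^ p) (c2 ^ p) * y ^ p ≤ c2 ^ p * y ^ p :=
            mul_le_mul_of_nonneg_right (min_le_right _ _) hyp.le
        _ = (c2 * y) ^ p := (Real.mul_rpow hc2.le hy.le).symm
        _ ≤ x ^ p := Real.rpow_le_rpow_of_nonpos hx h2 hp
    · calc x ^ p ≤ (c1 * y) ^ p := Real.rpow_le_rpow_of_nonpos (by positivity) h1 hp
        _ = c1 ^ p * y ^ p := Real.mul_rpow hc1.le hy.le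
        _ ≤ max (c1 ^ p) (c2 ^ p) * y ^ p :=
            mul_le_mul_of_nonneg_right (le_max_left _ _) hyp.le

/-- Inversion of weak (two-sided) small-ball asymptotics: if
`b_μ(s) ≈ (1/s)^a (log(1/s))^b` as `s → 0+`, then
`b_μ^{-1}(R) ≈ R^{-1/a} (log R)^{b/a}` as `R → ∞`. -/
theorem stmt_11 (bμ binv : ℝ → ℝ) (a b : ℝ) (ha : 0 < a)
    (hcont : ContinuousOn bμ (Ioi 0)) (hanti : StrictAntiOn bμ (Ioi 0))
    (hsurj : SurjOn bμ (Ioi 0) (Ioi 0)) (hmaps : MapsTo bμ (Ioi 0) (Ioi 0))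
    (hinv1 : ∀ s ∈ Ioi (0:ℝ), binv (bμ s) = s)
    (hinv2 : ∀ R ∈ Ioi (0:ℝ), bμ (binv R) = R)
    (hinvmaps : MapsTo binv (Ioi 0) (Ioi 0))
    (m M : ℝ) (hm : 0 < m) (hmM : m ≤ M)
    (hweak : ∃ ε > (0:ℝ), ∀ s ∈ Ioo (0:ℝ) ε,
      m ≤ bμ s / ((1 / s) ^ a * (Real.log (1 / s)) ^ b) ∧
      bμ s / ((1 / s) ^ a * (Real.log (1 / s)) ^ b) ≤ M) :
    ∃ m' M' : ℝ, 0 < m' ∧ m' ≤ M' ∧ ∃ R₀ : ℝ, ∀ R ≥ R₀,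
      m' ≤ binv R / (R ^ (-(1 / a)) * (Real.log R) ^ (b / a)) ∧
      binv R / (R ^ (-(1 / a)) * (Real.log R) ^ (b / a)) ≤ M' := by
  obtain ⟨ε, hε, hw⟩ := hweak
  set K := max |Real.log m| |Real.log M| with hK
  have hK0 : 0 ≤ K := le_trans (abs_nonneg _) (le_max_left _ _)
  have hM : 0 < M := lt_of_lt_of_le hm hmM
  -- eventually |b| * log L + K ≤ (a/2) * L
  obtain ⟨L₀, hL₀⟩ : ∃ L₀, ∀ L ≥ L₀, 1 ≤ L ∧ |b| * Real.log L + K ≤ (a/2) * L := by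
    have h1 : ∀ᶠ L in atTop, |b| * Real.log L ≤ (a/4) * L := by
      have hb := Real.isLittleO_log_id_atTop.bound
        (show (0:ℝ) < (a/4) / (|b| + 1) by positivity)
      filter_upwards [hb, eventually_ge_atTop (1:ℝ)] with L hL hL1
      have habs : |Real.log L| ≤ (a/4) / (|b| + 1) * L := by
        simpa [abs_of_nonneg (by linarith : (0:ℝ) ≤ L)] using hL
      calc |b| * Real.log L ≤ |b| * |Real.log L| :=
            mul_le_mul_of_nonneg_left (le_abs_self _) (abs_nonneg _)
        _ ≤ (|b| + 1) * ((a/4) / (|b| + 1) * L) :=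
            mul_le_mul (by linarith) habs (abs_nonneg _) (by positivity)
        _ = (a/4) * L := by field_simp
    have h2 : ∀ᶠ L in atTop, K ≤ (a/4) * L := by
      filter_upwards [eventually_ge_atTop ((4*K)/a)] with L hL
      rw [div_le_iff₀ ha] at hL
      linarith
    have h3 : ∀ᶠ L in atTop, (1:ℝ) ≤ L := eventually_ge_atTop 1
    obtain ⟨L₀, hL₀⟩ := eventually_atTop.mp ((h1.and h2).and h3)
    exact ⟨L₀, fun L hL => ⟨(hL₀ L hL).2, by have := (hL₀ L hL).1; linarith [this.1, this.2]⟩⟩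
  set s₁ := min (ε/2) (Real.exp (-L₀)) with hs₁def
  have hs₁ : 0 < s₁ := lt_min (by linarith) (Real.exp_pos _)
  have hs₁mem : s₁/2 ∈ Ioi (0:ℝ) := by simp [Set.mem_Ioi]; linarith
  have hbs₁ : 0 < bμ (s₁/2) := hmaps hs₁mem
  -- the constants
  set c1 := 1/(2*a) with hc1def
  set c2 := 2/a with hc2def
  have hc1 : 0 < c1 := by positivity
  have hc2 : 0 < c2 := by positivity
  set cmin := min (c1 ^ (b/a)) (c2 ^ (b/a)) with hcmin
  set cmax := max (c1 ^ (b/a)) (c2 ^ (b/a)) with hcmax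
  have hcmin0 : 0 < cmin := lt_min (Real.rpow_pos_of_pos hc1 _) (Real.rpow_pos_of_pos hc2 _)
  have hcmincmax : cmin ≤ cmax := le_trans (min_le_left _ _) (le_max_left _ _)
  refine ⟨m ^ (1/a) * cmin, M ^ (1/a) * cmax, by positivity, ?_, bμ (s₁/2) + 1, ?_⟩
  · exact mul_le_mul (Real.rpow_le_rpow hm.le hmM (by positivity)) hcmincmax hcmin0.le
      (Real.rpow_pos_of_pos hM _).le
  intro R hR
  have hRpos : 0 < R := by linarith
  have hRmem : R ∈ Ioi (0:ℝ) := hRpos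
  set s := binv R with hsdef
  have hs : 0 < s := hinvmaps hRmem
  have hbs : bμ s = R := hinv2 R hRmem
  -- s < s₁/2
  have hss : s < s₁/2 := by
    by_contra h
    push_neg at h
    have : bμ s ≤ bμ (s₁/2) := by
      rcases eq_or_lt_of_le h with h' | h'
      · rw [← h']
      · exact (hanti hs₁mem (Set.mem_Ioi.mpr hs) h').le
    rw [hbs] at this
    linarith
  have hsε : s < ε := lt_of_lt_of_le (by linarith [min_le_left (ε/2) (Real.exp (-L₀))] :
    s < ε/2 + 0) (by linarith)
  set L := Real.log (1/s) with hLdef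
  have hLneg : L = -Real.log s := by rw [hLdef, one_div, Real.log_inv]
  have hLL₀ : L₀ ≤ L := by
    have : s < Real.exp (-L₀) :=
      lt_of_lt_of_le (by linarith) (min_le_right (ε/2) (Real.exp (-L₀)))
    have := Real.log_lt_log hs this
    rw [Real.log_exp] at this
    linarith [hLneg]
  obtain ⟨hL1, hLbound⟩ := hL₀ L hLL₀
  have hL0 : 0 < L := by linarith
  have hu : (0:ℝ) < 1/s := by positivity
  have hf : 0 < (1/s) ^ a * L ^ b :=
    mul_pos (Real.rpow_pos_of_pos hu a) (Real.rpow_pos_of_pos hL0 b)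
  obtain ⟨hw1, hw2⟩ := hw s ⟨hs, hsε⟩
  have hlow : m * ((1/s) ^ a * L ^ b) ≤ R := by
    rw [← hbs]; exact (le_div_iff₀ hf).mp hw1
  have hhigh : R ≤ M * ((1/s) ^ a * L ^ b) := by
    rw [← hbs]; exact (div_le_iff₀ hf).mp hw2
  -- logarithmic bounds
  have hlogm : Real.log (m * ((1/s) ^ a * L ^ b)) = Real.log m + a * L + b * Real.log L := by
    rw [Real.log_mul hm.ne' hf.ne',
      Real.log_mul (Real.rpow_pos_of_pos hu a).ne' (Real.rpow_pos_of_pos hL0 b).ne',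
      Real.log_rpow hu, Real.log_rpow hL0, ← hLdef]
    ring
  have hlogM : Real.log (M * ((1/s) ^ a * L ^ b)) = Real.log M + a * L + b * Real.log L := by
    rw [Real.log_mul hM.ne' hf.ne',
      Real.log_mul (Real.rpow_pos_of_pos hu a).ne' (Real.rpow_pos_of_pos hL0 b).ne',
      Real.log_rpow hu, Real.log_rpow hL0, ← hLdef]
    ring
  have hlogL0 : 0 ≤ Real.log L := Real.log_nonneg hL1
  have habsb : -(|b| * Real.log L) ≤ b * Real.log L ∧ b * Real.log L ≤ |b| * Real.log L := by
    constructor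
    · have := neg_abs_le (b * Real.log L)
      rwa [abs_mul, abs_of_nonneg hlogL0] at this
    · have := le_abs_self (b * Real.log L)
      rwa [abs_mul, abs_of_nonneg hlogL0] at this
  have hKm : -K ≤ Real.log m := le_trans (neg_le_neg (le_max_left _ _)) (neg_abs_le _)
  have hKM : Real.log M ≤ K := le_trans (le_abs_self _) (le_max_right _ _)
  have hlogR_low : (a/2) * L ≤ Real.log R := by
    have h := Real.log_le_log (by positivity) hlow
    rw [hlogm] at h
    have := habsb.1
    linarith
  have hlogR_high : Real.log R ≤ 2*a * L := by
    have h := Real.log_le_log hRpos hhigh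
    rw [hlogM] at h
    have := habsb.2
    nlinarith [hL0]
  have hlogRpos : 0 < Real.log R := lt_of_lt_of_le (by positivity) hlogR_low
  have hcL1 : c1 * Real.log R ≤ L := by
    rw [hc1def]
    rw [div_mul_eq_mul_div, div_le_iff₀ (by positivity : (0:ℝ) < 2*a)]
    linarith
  have hcL2 : L ≤ c2 * Real.log R := by
    rw [hc2def, div_mul_eq_mul_div, le_div_iff₀ ha]
    linarith
  obtain ⟨hsand1, hsand2⟩ := aux_sandwich (b/a) hc1 hc2 hlogRpos hcL1 hcL2
  -- power bounds on u^a where u = 1/s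
  have hfac1 : m * ((1/s) ^ a * L ^ b) = (m * L ^ b) * (1/s) ^ a := by ring
  have hfac2 : M * ((1/s) ^ a * L ^ b) = (M * L ^ b) * (1/s) ^ a := by ring
  have hLb : (0:ℝ) < L ^ b := Real.rpow_pos_of_pos hL0 b
  have hua_low : R / (M * L ^ b) ≤ (1/s) ^ a := by
    rw [div_le_iff₀ (by positivity)]
    calc R ≤ M * ((1/s) ^ a * L ^ b) := hhigh
      _ = (1/s) ^ a * (M * L ^ b) := by ring
  have hua_high : (1/s) ^ a ≤ R / (m * L ^ b) := by
    rw [le_div_iff₀ (by positivity)]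
    calc (1/s) ^ a * (m * L ^ b) = m * ((1/s) ^ a * L ^ b) := by ring
      _ ≤ R := hlow
  have hsu : s = ((1/s) ^ a) ^ (-(1/a)) := by
    rw [← Real.rpow_mul hu.le, show a * -(1/a) = -1 by field_simp,
      Real.rpow_neg_one, one_div, inv_inv]
  have hs_up : s ≤ M ^ (1/a) * L ^ (b/a) * R ^ (-(1/a)) := by
    rw [← aux_rpow hRpos hM hL0 ha, hsu]
    exact Real.rpow_le_rpow_of_nonpos (by positivity) hua_low (neg_nonpos.mpr (by positivity))
  have hs_lo : m ^ (1/a) * L ^ (b/a) * R ^ (-(1/a)) ≤ s := by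
    rw [← aux_rpow hRpos hm hL0 ha, hsu]
    exact Real.rpow_le_rpow_of_nonpos (Real.rpow_pos_of_pos hu a) hua_high (neg_nonpos.mpr (by positivity))
  -- combine
  have hg : 0 < R ^ (-(1/a)) * Real.log R ^ (b/a) :=
    mul_pos (Real.rpow_pos_of_pos hRpos _) (Real.rpow_pos_of_pos hlogRpos _)
  have hRa : 0 < R ^ (-(1/a)) := Real.rpow_pos_of_pos hRpos _
  constructor
  · rw [le_div_iff₀ hg]
    calc m ^ (1/a) * cmin * (R ^ (-(1/a)) * Real.log R ^ (b/a))
        = m ^ (1/a) * (cmin * Real.log R ^ (b/a)) * R ^ (-(1/a)) := by ring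
      _ ≤ m ^ (1/a) * L ^ (b/a) * R ^ (-(1/a)) :=
          mul_le_mul_of_nonneg_right
            (mul_le_mul_of_nonneg_left hsand1 (Real.rpow_pos_of_pos hm _).le) hRa.le
      _ ≤ s := hs_lo
  · rw [div_le_iff₀ hg]
    calc s ≤ M ^ (1/a) * L ^ (b/a) * R ^ (-(1/a)) := hs_up
      _ ≤ M ^ (1/a) * (cmax * Real.log R ^ (b/a)) * R ^ (-(1/a)) :=
          mul_le_mul_of_nonneg_right
            (mul_le_mul_of_nonneg_left hsand2 (Real.rpow_pos_of_pos hM _).le) hRa.le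
      _ = M ^ (1/a) * cmax * (R ^ (-(1/a)) * Real.log R ^ (b/a)) := by ring
end

section
/- Let α > 1, x_0 > 0, and f: [0, x_0] → [0,∞) continuous with f(0) = 0, continuously differentiable on (0, x_0), such that x ↦ x^{1-α}·f'(x) is monotone decreasing on (0, x_0). Then for every n ∈ ℕ and every (x_1,...,x_n) ∈ [0,x_0]^n with ∑_{i=1}^n x_i = 1 and ∑_{i=1}^n x_i^α ≥ x_0^α, one has ∑_{i=1}^n f(x_i) ≥ f(x_0). -/
open Set

/-!
Writing `g(y) = f(y^{1/α})`, the hypothesis says that `g` is concave with `g(0) = 0`, so `g(y)/y`,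
i.e. `f(x)/x^α`, is decreasing. Hence `x_i^α f(x₀) ≤ x₀^α f(x_i)` for every `i`, and summing over
`i` together with `x₀^α ≤ ∑ x_i^α` and `f(x₀) ≥ 0` gives the claim.
-/

theorem mul_deriv_le_of_antitoneOn_rpow_mul_deriv {f : ℝ → ℝ} {α b t : ℝ} (hα : 0 < α)
    (hcont : ContinuousOn f (Icc 0 b)) (hf0 : f 0 = 0) (hdiff : DifferentiableOn ℝ f (Ioo 0 b))
    (hanti : AntitoneOn (fun x => x ^ (1 - α) * deriv f x) (Ioo 0 b)) (ht : t ∈ Ioo 0 b) :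
    t * deriv f t ≤ α * f t := by
  obtain ⟨c, hc⟩ : ∃ c, c = t ^ (1 - α) * deriv f t := ⟨_, rfl⟩
  -- `f' ≥ c s^{α-1}` on `(0, t)`, so `f - (c/α) s^α` increases from its value `0` at `s = 0`.
  have hmono : MonotoneOn (fun s => f s - c / α * s ^ α) (Icc 0 t) := by
    refine monotoneOn_of_hasDerivWithinAt_nonneg
      (f' := fun s => deriv f s - c / α * (α * s ^ (α - 1)))
      (convex_Icc 0 t) ?_ (fun s hs => ?_) (fun s hs => ?_)
    · exact (hcont.mono (Icc_subset_Icc le_rfl ht.2.le)).sub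
        (continuousOn_const.mul (continuousOn_id.rpow_const fun _ _ => Or.inr hα.le))
    all_goals
      rw [interior_Icc] at hs
      have hsb : s ∈ Ioo 0 b := ⟨hs.1, hs.2.trans ht.2⟩
    · have hf' := ((hdiff s hsb).differentiableAt (isOpen_Ioo.mem_nhds hsb)).hasDerivAt
      exact (hf'.sub ((Real.hasDerivAt_rpow_const (Or.inl hs.1.ne')).const_mul _)).hasDerivWithinAt
    · have hcs : c ≤ s ^ (1 - α) * deriv f s := hc ▸ hanti hsb ht hs.2.le
      have hs_pow : s ^ (α - 1) * s ^ (1 - α) = 1 := by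
        rw [← Real.rpow_add hs.1]; norm_num
      have := mul_le_mul_of_nonneg_left hcs (Real.rpow_pos_of_pos hs.1 (α - 1)).le
      have hcancel : c / α * (α * s ^ (α - 1)) = c * s ^ (α - 1) := by field_simp
      simp only [hcancel]
      linear_combination this + deriv f s * hs_pow
  have hF := hmono ⟨le_rfl, ht.1.le⟩ ⟨ht.1.le, le_rfl⟩ ht.1.le
  have ht_pow : t ^ (1 - α) * t ^ α = t := by
    rw [← Real.rpow_add ht.1]; norm_num
  simp only [hf0, Real.zero_rpow hα.ne', mul_zero, sub_zero] at hF
  have := mul_nonneg hα.le hF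
  have hcancel : α * (f t - c / α * t ^ α) = α * f t - c * t ^ α := by field_simp
  rw [hcancel] at this
  linear_combination this - deriv f t * ht_pow - t ^ α * hc

theorem antitoneOn_mul_rpow_neg_of_mul_deriv_le {f : ℝ → ℝ} {α b : ℝ}
    (hcont : ContinuousOn f (Ioc 0 b)) (hdiff : DifferentiableOn ℝ f (Ioo 0 b))
    (h : ∀ t ∈ Ioo 0 b, t * deriv f t ≤ α * f t) :
    AntitoneOn (fun s => f s * s ^ (-α)) (Ioc 0 b) := by
  refine antitoneOn_of_hasDerivWithinAt_nonpos
    (f' := fun s => deriv f s * s ^ (-α) + f s * (-α * s ^ (-α - 1)))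
    (convex_Ioc 0 b) ?_ (fun s hs => ?_) (fun s hs => ?_)
  · exact hcont.mul (continuousOn_id.rpow_const fun s hs => Or.inl hs.1.ne')
  all_goals rw [interior_Ioc] at hs
  · have hf' := ((hdiff s hs).differentiableAt (isOpen_Ioo.mem_nhds hs)).hasDerivAt
    exact (hf'.mul (Real.hasDerivAt_rpow_const (Or.inl hs.1.ne'))).hasDerivWithinAt
  · have hs_pow : s ^ (-α - 1) * s = s ^ (-α) := by
      rw [← Real.rpow_add_one hs.1.ne']; norm_num
    have := mul_le_mul_of_nonneg_left (h s hs) (Real.rpow_pos_of_pos hs.1 (-α - 1)).le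
    rw [← hs_pow]
    nlinarith

theorem rpow_mul_le_rpow_mul_of_antitoneOn {f : ℝ → ℝ} {α x₀ y : ℝ} (hα : 0 < α) (hf0 : f 0 = 0)
    (hanti : AntitoneOn (fun s => f s * s ^ (-α)) (Ioc 0 x₀)) (hy : y ∈ Icc 0 x₀) :
    y ^ α * f x₀ ≤ x₀ ^ α * f y := by
  obtain rfl | hy0 := hy.1.eq_or_lt
  · simp [Real.zero_rpow hα.ne', hf0]
  have hx₀ : 0 < x₀ := hy0.trans_le hy.2
  have hle := hanti ⟨hy0, hy.2⟩ ⟨hx₀, le_rfl⟩ hy.2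
  have := mul_le_mul_of_nonneg_right hle
    (mul_pos (Real.rpow_pos_of_pos hy0 α) (Real.rpow_pos_of_pos hx₀ α)).le
  have hy_pow : y ^ (-α) * y ^ α = 1 := by rw [← Real.rpow_add hy0]; norm_num
  have hx_pow : x₀ ^ (-α) * x₀ ^ α = 1 := by rw [← Real.rpow_add hx₀]; norm_num
  calc y ^ α * f x₀ = f x₀ * x₀ ^ (-α) * (y ^ α * x₀ ^ α) := by
        linear_combination (y ^ α * f x₀) * hx_pow.symm
    _ ≤ f y * y ^ (-α) * (y ^ α * x₀ ^ α) := this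
    _ = x₀ ^ α * f y := by linear_combination (x₀ ^ α * f y) * hy_pow

theorem stmt_14_general (α x₀ : ℝ) (hα : 1 < α) (hx₀ : 0 < x₀) (f : ℝ → ℝ)
    (hcont : ContinuousOn f (Icc 0 x₀)) (hf0 : f 0 = 0)
    (hnonneg : ∀ x ∈ Icc (0:ℝ) x₀, 0 ≤ f x)
    (hdiff : ContDiffOn ℝ 1 f (Ioo 0 x₀))
    (hanti : AntitoneOn (fun x => x ^ (1 - α) * deriv f x) (Ioo 0 x₀))
    (n : ℕ) (x : Fin n → ℝ) (hx : ∀ i, x i ∈ Icc (0:ℝ) x₀)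
    (hsumα : x₀ ^ α ≤ ∑ i, x i ^ α) :
    f x₀ ≤ ∑ i, f (x i) := by
  have hα0 : 0 < α := by linarith
  have hdiff' := hdiff.differentiableOn one_ne_zero
  have hratio := antitoneOn_mul_rpow_neg_of_mul_deriv_le (hcont.mono Ioc_subset_Icc_self) hdiff'
    fun t ht => mul_deriv_le_of_antitoneOn_rpow_mul_deriv hα0 hcont hf0 hdiff' hanti ht
  have hterm i : x i ^ α * f x₀ ≤ x₀ ^ α * f (x i) :=
    rpow_mul_le_rpow_mul_of_antitoneOn hα0 hf0 hratio (hx i)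
  have hsum := Finset.sum_le_sum fun i (_ : i ∈ Finset.univ) => hterm i
  rw [← Finset.sum_mul, ← Finset.mul_sum] at hsum
  refine le_of_mul_le_mul_left ?_ (Real.rpow_pos_of_pos hx₀ α)
  calc x₀ ^ α * f x₀ ≤ (∑ i, x i ^ α) * f x₀ :=
        mul_le_mul_of_nonneg_right hsumα (hnonneg x₀ ⟨hx₀.le, le_rfl⟩)
    _ ≤ x₀ ^ α * ∑ i, f (x i) := hsum

/-- Superadditivity-type lower bound: if `f : [0,x₀] → [0,∞)` is continuous with
`f(0) = 0`, continuously differentiable on `(0,x₀)` with `x ↦ x^{1-α} f'(x)` monotone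
decreasing, then for any `(x_1,…,x_n) ∈ [0,x₀]^n` with `∑ x_i = 1` and `∑ x_i^α ≥ x₀^α`
one has `∑ f(x_i) ≥ f(x₀)`. -/
theorem stmt_14 (α x₀ : ℝ) (hα : 1 < α) (hx₀ : 0 < x₀) (f : ℝ → ℝ)
    (hcont : ContinuousOn f (Icc 0 x₀)) (hf0 : f 0 = 0)
    (hnonneg : ∀ x ∈ Icc (0:ℝ) x₀, 0 ≤ f x)
    (hdiff : ContDiffOn ℝ 1 f (Ioo 0 x₀))
    (hanti : AntitoneOn (fun x => x ^ (1 - α) * deriv f x) (Ioo 0 x₀))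
    (n : ℕ) (x : Fin n → ℝ) (hx : ∀ i, x i ∈ Icc (0:ℝ) x₀)
    (hsum1 : ∑ i, x i = 1) (hsumα : x₀ ^ α ≤ ∑ i, x i ^ α) :
    f x₀ ≤ ∑ i, f (x i) :=
  stmt_14_general α x₀ hα hx₀ f hcont hf0 hnonneg hdiff hanti n x hx hsumα
end
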